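/- Let M be an MDP with a unique stage-wise (strongly globally) optimal deterministic policy π and minimal value gap Δ^π(M) > 0. Then for any γ ∈ (0, Δ^π(M)/(6·S·A·H·(H+1))), π is a globally optimal policy in every MDP of the form (1-γ)·M + γ·M' for M' ∈ M (coordinatewise convex combination of rewards and transitions). In particular, the set {(1-γ)M + γM'' : M'' ∈ M} is contained in the set of MDPs where π is globally optimal. -/

import Mathlib

/-!
The mixture `(1 - γ)M + γM''` is uniformly close to `M`: each mean reward moves by at most `γ`
and each transition row by at most `2γ` in `ℓ¹`. Backward induction over the stages turns this
into the simulation bound `|Q' - Q| ≤ H (γ + 2γH)` on the `Q`-values of `π`, and the choice of `γ`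
makes twice this bound at most the value gap `Δ`, so no action can overtake `π h s` in the mixture.
-/

open Finset

/-- State-action value function `Q_h^π(s,a)` of a deterministic Markov policy `π`. -/
noncomputable def Qval {S A : Type*} [Fintype S] (H : ℕ) (μ : S → A → ℕ → ℝ)
    (p : S → A → ℕ → S → ℝ) (π : ℕ → S → A) : ℕ → S → A → ℝ
  | h, s, a =>
    if hh : H < h then 0
    else μ s a h + ∑ s' : S, p s a h s' * Qval H μ p π (h + 1) s' (π (h + 1) s')
  termination_by h _ _ => H + 1 - h
  decreasing_by simp_wf; omega

def IsStochastic {S A : Type*} [Fintype S] (p : S → A → ℕ → S → ℝ) : Prop :=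
  ∀ s a h, (∀ s', 0 ≤ p s a h s') ∧ ∑ s' : S, p s a h s' = 1

theorem mix_sub_self (x y γ : ℝ) : (1 - γ) * x + γ * y - x = γ * (y - x) := by ring

theorem abs_mix_sub_self_le {x y γ : ℝ} (hγ : 0 ≤ γ) (hx : x ∈ Set.Icc (0 : ℝ) 1)
    (hy : y ∈ Set.Icc (0 : ℝ) 1) : |(1 - γ) * x + γ * y - x| ≤ γ := by
  rw [mix_sub_self, abs_mul, abs_of_nonneg hγ]
  exact mul_le_of_le_one_right hγ (abs_sub_le_of_nonneg_of_le hy.1 hy.2 hx.1 hx.2)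

theorem cast_add_one_sub_eq {H h : ℕ} (hh : h ≤ H) :
    ((H + 1 - h : ℕ) : ℝ) = 1 + ((H + 1 - (h + 1) : ℕ) : ℝ) := by
  rw [show H + 1 - h = 1 + (H + 1 - (h + 1)) by omega, Nat.cast_add, Nat.cast_one]

namespace IsStochastic

variable {S A : Type*} [Fintype S] {p q : S → A → ℕ → S → ℝ} {γ : ℝ}

theorem mix (hp : IsStochastic p) (hq : IsStochastic q) (hγ0 : 0 ≤ γ) (hγ1 : γ ≤ 1) :
    IsStochastic fun s a h s' => (1 - γ) * p s a h s' + γ * q s a h s' := fun s a h =>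
  ⟨fun s' => add_nonneg (mul_nonneg (sub_nonneg.2 hγ1) ((hp s a h).1 s'))
      (mul_nonneg hγ0 ((hq s a h).1 s')),
    by rw [sum_add_distrib, ← mul_sum, ← mul_sum, (hp s a h).2, (hq s a h).2]; ring⟩

theorem sum_abs_mix_sub_self_le (hp : IsStochastic p) (hq : IsStochastic q) (hγ : 0 ≤ γ)
    (s : S) (a : A) (h : ℕ) :
    ∑ s' : S, |(1 - γ) * p s a h s' + γ * q s a h s' - p s a h s'| ≤ 2 * γ := calc
  _ = γ * ∑ s' : S, |q s a h s' - p s a h s'| := by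
    simp only [mix_sub_self, abs_mul, abs_of_nonneg hγ, mul_sum]
  _ ≤ γ * ∑ s' : S, (q s a h s' + p s a h s') := by
    gcongr with s'
    exact (abs_sub _ _).trans_eq
      (by rw [abs_of_nonneg ((hq s a h).1 s'), abs_of_nonneg ((hp s a h).1 s')])
  _ = 2 * γ := by rw [sum_add_distrib, (hq s a h).2, (hp s a h).2]; ring

end IsStochastic

namespace Qval

variable {S A : Type*} [Fintype S] {H : ℕ} {μ : S → A → ℕ → ℝ} {p : S → A → ℕ → S → ℝ}
  {π : ℕ → S → A}

theorem of_lt {h : ℕ} (hh : H < h) (s : S) (a : A) : Qval H μ p π h s a = 0 := by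
  rw [Qval]; simp [hh]

theorem of_le {h : ℕ} (hh : h ≤ H) (s : S) (a : A) :
    Qval H μ p π h s a =
      μ s a h + ∑ s' : S, p s a h s' * Qval H μ p π (h + 1) s' (π (h + 1) s') := by
  rw [Qval]; simp [Nat.not_lt.mpr hh]

theorem mem_Icc (hμ : ∀ s a h, 1 ≤ h → h ≤ H → μ s a h ∈ Set.Icc (0 : ℝ) 1)
    (hp : IsStochastic p) (h : ℕ) (h1 : 1 ≤ h) (s : S) (a : A) :
    Qval H μ p π h s a ∈ Set.Icc (0 : ℝ) (H + 1 - h : ℕ) := by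
  by_cases hh : H < h
  · simp [of_lt hh]
  obtain ⟨hμ0, hμ1⟩ := hμ s a h h1 (not_lt.mp hh)
  have ih (s' : S) := mem_Icc hμ hp (h + 1) (by omega) s' (π (h + 1) s')
  have hsum : ∑ s' : S, p s a h s' * Qval H μ p π (h + 1) s' (π (h + 1) s')
      ∈ Set.Icc (0 : ℝ) (H + 1 - (h + 1) : ℕ) := by
    constructor
    · exact sum_nonneg fun s' _ => mul_nonneg ((hp s a h).1 s') (ih s').1
    · calc _ ≤ ∑ s' : S, p s a h s' * ((H + 1 - (h + 1) : ℕ) : ℝ) :=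
            sum_le_sum fun s' _ => mul_le_mul_of_nonneg_left (ih s').2 ((hp s a h).1 s')
        _ = _ := by rw [← sum_mul, (hp s a h).2, one_mul]
  rw [of_le (not_lt.mp hh), cast_add_one_sub_eq (not_lt.mp hh)]
  exact ⟨by linarith [hsum.1], by linarith [hsum.2]⟩
termination_by H + 1 - h

theorem sub_eq {h : ℕ} (hh : h ≤ H) (μ' : S → A → ℕ → ℝ) (p' : S → A → ℕ → S → ℝ) (s : S) (a : A) :
    Qval H μ p π h s a - Qval H μ' p' π h s a = μ s a h - μ' s a h +
      ∑ s' : S, (p s a h s' * (Qval H μ p π (h + 1) s' (π (h + 1) s')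
          - Qval H μ' p' π (h + 1) s' (π (h + 1) s'))
        + (p s a h s' - p' s a h s') * Qval H μ' p' π (h + 1) s' (π (h + 1) s')) := by
  rw [of_le hh, of_le hh]
  simp only [mul_sub, sub_mul, sub_add_sub_cancel, sum_sub_distrib]
  ring

theorem abs_sub_le {μ' : S → A → ℕ → ℝ} {p' : S → A → ℕ → S → ℝ} {εμ εp : ℝ}
    (hp : IsStochastic p) (hμ' : ∀ s a h, 1 ≤ h → h ≤ H → μ' s a h ∈ Set.Icc (0 : ℝ) 1)
    (hp' : IsStochastic p') (hμμ' : ∀ s a h, 1 ≤ h → h ≤ H → |μ s a h - μ' s a h| ≤ εμ)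
    (hpp' : ∀ s a h, 1 ≤ h → h ≤ H → ∑ s' : S, |p s a h s' - p' s a h s'| ≤ εp)
    (h : ℕ) (h1 : 1 ≤ h) (s : S) (a : A) :
    |Qval H μ p π h s a - Qval H μ' p' π h s a| ≤ (H + 1 - h : ℕ) * (εμ + H * εp) := by
  by_cases hh : H < h
  · simp [of_lt hh, show H + 1 - h = 0 by omega]
  replace hh := not_lt.mp hh
  set Q := fun s' => Qval H μ p π (h + 1) s' (π (h + 1) s')
  set Q' := fun s' => Qval H μ' p' π (h + 1) s' (π (h + 1) s')
  set ε : ℝ := (H + 1 - (h + 1) : ℕ) * (εμ + H * εp)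
  have ih (s' : S) : |Q s' - Q' s'| ≤ ε :=
    Qval.abs_sub_le hp hμ' hp' hμμ' hpp' (h + 1) (by omega) s' (π (h + 1) s')
  have hQ' (s' : S) : |Q' s'| ≤ H := by
    obtain ⟨h0, hle⟩ := mem_Icc hμ' hp' (h + 1) (by omega) s' (π (h + 1) s')
    rw [abs_of_nonneg h0]
    exact hle.trans (Nat.cast_le.mpr (by omega))
  have hnext : ∑ s' : S, |p s a h s' * (Q s' - Q' s') + (p s a h s' - p' s a h s') * Q' s'|
      ≤ ε + H * εp := calc
    _ ≤ ∑ s' : S, (p s a h s' * ε + |p s a h s' - p' s a h s'| * H) := by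
      refine sum_le_sum fun s' _ => (abs_add_le _ _).trans (add_le_add ?_ ?_)
      · rw [abs_mul, abs_of_nonneg ((hp s a h).1 s')]
        exact mul_le_mul_of_nonneg_left (ih s') ((hp s a h).1 s')
      · rw [abs_mul]
        exact mul_le_mul_of_nonneg_left (hQ' s') (abs_nonneg _)
    _ ≤ ε + εp * H := by
      rw [sum_add_distrib, ← sum_mul, ← sum_mul, (hp s a h).2, one_mul]
      gcongr
      exact hpp' s a h h1 hh
    _ = ε + H * εp := by ring
  rw [sub_eq hh, cast_add_one_sub_eq hh]
  calc _ ≤ |μ s a h - μ' s a h| + ∑ s' : S,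
        |p s a h s' * (Q s' - Q' s') + (p s a h s' - p' s a h s') * Q' s'| :=
      (abs_add_le _ _).trans (add_le_add_right (abs_sum_le_sum_abs _ _) _)
    _ ≤ εμ + (ε + H * εp) := add_le_add (hμμ' s a h h1 hh) hnext
    _ = _ := by ring
termination_by H + 1 - h

end Qval

theorem mixing_weight_bounds {n m H Δ γ : ℝ} (hn : 1 ≤ n) (hm : 1 ≤ m) (hH : 0 < H)
    (hΔ : Δ ≤ H) (hγ0 : 0 < γ) (hγ : γ < Δ / (6 * n * m * H * (H + 1))) :
    γ ≤ 1 ∧ 2 * H * (γ + H * (2 * γ)) ≤ Δ := by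
  have hnm : 1 ≤ n * m := one_le_mul_of_one_le_of_one_le hn hm
  have hX : 6 * H * (H + 1) ≤ 6 * n * m * H * (H + 1) := by
    rw [show 6 * n * m * H * (H + 1) = n * m * (6 * H * (H + 1)) by ring]
    exact le_mul_of_one_le_left (by positivity) hnm
  rw [lt_div_iff₀ (by positivity)] at hγ
  have hγX : γ * (6 * H * (H + 1)) < Δ := (mul_le_mul_of_nonneg_left hX hγ0.le).trans_lt hγ
  refine ⟨le_of_not_gt fun hγ1 => ?_, ?_⟩
  · have := lt_mul_of_one_lt_left (by positivity : 0 < 6 * H * (H + 1)) hγ1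
    nlinarith
  · nlinarith [mul_pos hγ0 hH, mul_pos (mul_pos hγ0 hH) hH]

theorem stmt13_general {S A : Type*} [Fintype S] [Fintype A] (H : ℕ)
    (μ : S → A → ℕ → ℝ) (p : S → A → ℕ → S → ℝ)
    (hμ : ∀ s a h, 1 ≤ h → h ≤ H → μ s a h ∈ Set.Ioo (0:ℝ) 1)
    (hp : ∀ s a h, (∀ s', 0 ≤ p s a h s') ∧ ∑ s' : S, p s a h s' = 1)
    (π : ℕ → S → A) (Δ : ℝ)
    (hgap : ∀ h s a, 1 ≤ h → h ≤ H → a ≠ π h s →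
        Δ ≤ Qval H μ p π h s (π h s) - Qval H μ p π h s a)
    (γ : ℝ)
    (hγ : γ ∈ Set.Ioo 0
      (Δ / (6 * (Fintype.card S : ℝ) * (Fintype.card A : ℝ) * (H : ℝ) * ((H : ℝ) + 1)))) :
    ∀ (μ'' : S → A → ℕ → ℝ) (p'' : S → A → ℕ → S → ℝ),
      (∀ s a h, 1 ≤ h → h ≤ H → μ'' s a h ∈ Set.Ioo (0:ℝ) 1) →
      (∀ s a h, (∀ s', 0 ≤ p'' s a h s') ∧ ∑ s' : S, p'' s a h s' = 1) →
      ∀ h s a, 1 ≤ h → h ≤ H →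
        Qval H (fun s a h => (1 - γ) * μ s a h + γ * μ'' s a h)
            (fun s a h s' => (1 - γ) * p s a h s' + γ * p'' s a h s') π h s a
          ≤ Qval H (fun s a h => (1 - γ) * μ s a h + γ * μ'' s a h)
            (fun s a h s' => (1 - γ) * p s a h s' + γ * p'' s a h s') π h s (π h s) := by
  intro μ'' p'' hμ'' hp'' h s a h1 hH
  rcases eq_or_ne a (π h s) with rfl | ha
  · rfl
  have hμIcc s a h h1 hH := Set.Ioo_subset_Icc_self (hμ s a h h1 hH)
  have hμ''Icc s a h h1 hH := Set.Ioo_subset_Icc_self (hμ'' s a h h1 hH)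
  have hΔH : Δ ≤ H := by
    have hπQ := (Qval.mem_Icc (π := π) hμIcc hp h h1 s (π h s)).2
    have haQ := (Qval.mem_Icc (π := π) hμIcc hp h h1 s a).1
    have : ((H + 1 - h : ℕ) : ℝ) ≤ H := Nat.cast_le.mpr (by omega)
    linarith [hgap h s a h1 hH ha]
  obtain ⟨hγ1, hγΔ⟩ := mixing_weight_bounds
    (Nat.one_le_cast.mpr (Fintype.card_pos_iff.mpr ⟨s⟩))
    (Nat.one_le_cast.mpr (Fintype.card_pos_iff.mpr ⟨a⟩))
    (by exact_mod_cast (by omega : 0 < H)) hΔH hγ.1 hγ.2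
  have hclose := Qval.abs_sub_le (π := π) (IsStochastic.mix hp hp'' hγ.1.le hγ1) hμIcc hp
    (fun s a h h1 hH => abs_mix_sub_self_le hγ.1.le (hμIcc s a h h1 hH) (hμ''Icc s a h h1 hH))
    (fun s a h _ _ => IsStochastic.sum_abs_mix_sub_self_le hp hp'' hγ.1.le s a h) h h1 s
  have hε : 2 * (((H + 1 - h : ℕ) : ℝ) * (γ + H * (2 * γ))) ≤ Δ := by
    have hk : ((H + 1 - h : ℕ) : ℝ) ≤ H := Nat.cast_le.mpr (by omega)
    have hc : 0 ≤ γ + H * (2 * γ) := by nlinarith [hγ.1, Nat.cast_nonneg (α := ℝ) H]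
    nlinarith [mul_le_mul_of_nonneg_right hk hc]
  have hπQ := abs_le.mp (hclose (π h s))
  have haQ := abs_le.mp (hclose a)
  linarith [hgap h s a h1 hH ha]

/-- If `π` is the unique stage-wise optimal policy of `M = (μ,p)` with minimal value gap
`Δ > 0`, then for any `γ ∈ (0, Δ/(6·S·A·H·(H+1)))` and any MDP `M'' = (μ'',p'')` in the
parametric class, `π` is globally optimal in the coordinatewise mixture
`(1-γ)M + γM''`. -/
theorem stmt13 {S A : Type*} [Fintype S] [Fintype A] (H : ℕ) (hH : 1 ≤ H)
    (μ : S → A → ℕ → ℝ) (p : S → A → ℕ → S → ℝ)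
    (hμ : ∀ s a h, 1 ≤ h → h ≤ H → μ s a h ∈ Set.Ioo (0:ℝ) 1)
    (hp : ∀ s a h, (∀ s', 0 ≤ p s a h s') ∧ ∑ s' : S, p s a h s' = 1)
    (π : ℕ → S → A) (Δ : ℝ) (hΔ : 0 < Δ)
    (hgap : ∀ h s a, 1 ≤ h → h ≤ H → a ≠ π h s →
        Δ ≤ Qval H μ p π h s (π h s) - Qval H μ p π h s a)
    (γ : ℝ)
    (hγ : γ ∈ Set.Ioo 0
      (Δ / (6 * (Fintype.card S : ℝ) * (Fintype.card A : ℝ) * (H : ℝ) * ((H : ℝ) + 1)))) :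
    ∀ (μ'' : S → A → ℕ → ℝ) (p'' : S → A → ℕ → S → ℝ),
      (∀ s a h, 1 ≤ h → h ≤ H → μ'' s a h ∈ Set.Ioo (0:ℝ) 1) →
      (∀ s a h, (∀ s', 0 ≤ p'' s a h s') ∧ ∑ s' : S, p'' s a h s' = 1) →
      ∀ h s a, 1 ≤ h → h ≤ H →
        Qval H (fun s a h => (1 - γ) * μ s a h + γ * μ'' s a h)
            (fun s a h s' => (1 - γ) * p s a h s' + γ * p'' s a h s') π h s a
          ≤ Qval H (fun s a h => (1 - γ) * μ s a h + γ * μ'' s a h)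
            (fun s a h s' => (1 - γ) * p s a h s' + γ * p'' s a h s') π h s (π h s) :=
  stmt13_general H μ p hμ hp π Δ hgap γ hγ
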